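/- Let X ⊂ ℂⁿ be a compact set with nonempty interior X°, and let u ∈ PSH(X). Then the restriction of u to X° is a plurisubharmonic function on the open set X° in the classical sense. -/

import Mathlib

open MeasureTheory Metric Set Filter

noncomputable section

/-- The positive part of an extended real number, as an element of `ℝ≥0∞`. -/
def erealPos (x : EReal) : ENNReal := if x = ⊤ then ⊤ else ENNReal.ofReal x.toReal

/-- The integral of an extended-real-valued function `u` against a measure `μ`,
defined as the difference of the (unsigned) lower integrals of the positive and
negative parts of `u`. -/
def erealIntegral {α : Type*} [MeasurableSpace α] (μ : Measure α) (u : α → EReal) : EReal :=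
  ((∫⁻ a, erealPos (u a) ∂μ : ENNReal) : EReal) - ((∫⁻ a, erealPos (-(u a)) ∂μ : ENNReal) : EReal)

/-- The normalized "angle" measure on `(0, 2π]`, used to express averages over circles. -/
def circleAngleMeasure : Measure ℝ :=
  (ENNReal.ofReal (2 * Real.pi))⁻¹ • volume.restrict (Set.Ioc 0 (2 * Real.pi))

/-- A function `u` with values in `[-∞, ∞)` is plurisubharmonic on an open set
`U ⊆ ℂⁿ` if it is upper semicontinuous on `U`, takes no value `+∞` on `U`, and
satisfies the sub-mean-value inequality on every closed disc of every complex line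
contained in `U`. -/
def PshOn {n : ℕ} (u : (Fin n → ℂ) → EReal) (U : Set (Fin n → ℂ)) : Prop :=
  UpperSemicontinuousOn u U ∧ (∀ z ∈ U, u z ≠ ⊤) ∧
  ∀ (a b : Fin n → ℂ) (r : ℝ), 0 < r →
    (∀ w : ℂ, ‖w‖ ≤ r → a + w • b ∈ U) →
    u a ≤ erealIntegral circleAngleMeasure
      (fun θ : ℝ => u (a + ((r : ℝ) * Complex.exp (θ * Complex.I)) • b))

/-- `u : ℂⁿ → ℝ` belongs to `PSH°(X)` (for `X` compact) if there is an open
neighborhood `U ⊇ X` and a continuous plurisubharmonic function `v` on `U`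
with `v = u` on `X`. -/
def PshO {n : ℕ} (u : (Fin n → ℂ) → ℝ) (X : Set (Fin n → ℂ)) : Prop :=
  ∃ U : Set (Fin n → ℂ), IsOpen U ∧ X ⊆ U ∧
    ∃ v : (Fin n → ℂ) → ℝ, ContinuousOn v U ∧ PshOn (fun z => (v z : EReal)) U ∧
      ∀ z ∈ X, u z = v z

/-- The Jensen measures at `z` with respect to the compact set `X`: Borel probability
measures supported in `X` such that `u z ≤ ∫ u dμ` for all `u ∈ PSH°(X)`. -/
def JensenMeasures {n : ℕ} (X : Set (Fin n → ℂ)) (z : Fin n → ℂ) :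
    Set (Measure (Fin n → ℂ)) :=
  {μ | IsProbabilityMeasure μ ∧ μ Xᶜ = 0 ∧
    ∀ u : (Fin n → ℂ) → ℝ, PshO u X → u z ≤ ∫ x, u x ∂μ}

/-- An upper semicontinuous function `u : X → [-∞, ∞)` is plurisubharmonic on the
compact set `X` if `u z ≤ ∫ u dμ` for every `z ∈ X` and every Jensen measure
`μ ∈ J_z(X)`. -/
def PshCompact {n : ℕ} (u : (Fin n → ℂ) → EReal) (X : Set (Fin n → ℂ)) : Prop :=
  UpperSemicontinuousOn u X ∧ (∀ z ∈ X, u z ≠ ⊤) ∧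
  ∀ z ∈ X, ∀ μ ∈ JensenMeasures X z, u z ≤ erealIntegral μ u

/-- A (bounded) domain: a bounded, connected, open subset of `ℂⁿ`. -/
def IsBoundedDomain {n : ℕ} (Ω : Set (Fin n → ℂ)) : Prop :=
  IsOpen Ω ∧ IsConnected Ω ∧ Bornology.IsBounded Ω

/-- The defining property of P-hyperconvexity: a non-constant function
`φ ∈ PSH(Ω̄) ∩ C(Ω̄)` vanishing on `∂Ω`. -/
def PHxExhaustion {n : ℕ} (Ω : Set (Fin n → ℂ)) : Prop :=
  ∃ φ : (Fin n → ℂ) → ℝ,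
    PshCompact (fun z => (φ z : EReal)) (closure Ω) ∧ ContinuousOn φ (closure Ω) ∧
    (∃ z ∈ closure Ω, ∃ w ∈ closure Ω, φ z ≠ φ w) ∧
    ∀ z ∈ frontier Ω, φ z = 0

/-- A bounded domain `Ω ⊂ ℂⁿ` is P-hyperconvex if there is a non-constant
`φ ∈ PSH(Ω̄) ∩ C(Ω̄)` with `φ = 0` on `∂Ω`. -/
def IsPHyperconvex {n : ℕ} (Ω : Set (Fin n → ℂ)) : Prop :=
  IsBoundedDomain Ω ∧ PHxExhaustion Ω

/-- A bounded domain `Ω ⊂ ℂⁿ` is hyperconvex if there is a non-constant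
`φ ∈ PSH(Ω) ∩ C(Ω̄)` with `φ = 0` on `∂Ω`. -/
def IsHyperconvex {n : ℕ} (Ω : Set (Fin n → ℂ)) : Prop :=
  IsBoundedDomain Ω ∧
  ∃ φ : (Fin n → ℂ) → ℝ,
    PshOn (fun z => (φ z : EReal)) Ω ∧ ContinuousOn φ (closure Ω) ∧
    (∃ z ∈ closure Ω, ∃ w ∈ closure Ω, φ z ≠ φ w) ∧
    ∀ z ∈ frontier Ω, φ z = 0

end

/-!
Pushing the normalized angle measure forward along the circle `θ ↦ a + r e^{iθ} b` gives a
Jensen measure at `a` for `X` whenever the disc `{a + w b : |w| ≤ r}` lies in `X`: every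
continuous plurisubharmonic function on a neighbourhood of `X` satisfies the sub-mean-value
inequality on that disc. The defining inequality of `PSH(X)` for this measure is then exactly the
classical sub-mean-value inequality of `u` on the disc.
-/

lemma measurable_erealPos : Measurable erealPos := by
  unfold erealPos
  refine Measurable.ite ?_ measurable_const
    (ENNReal.measurable_ofReal.comp measurable_ereal_toReal)
  exact measurableSet_singleton (⊤ : EReal)

lemma erealIntegral_coe {α : Type*} [MeasurableSpace α] {μ : Measure α} {g : α → ℝ}
    (hg : Integrable g μ) :
    erealIntegral μ (fun a => (g a : EReal)) = ((∫ a, g a ∂μ : ℝ) : EReal) := by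
  have lintegral_ofReal_ne_top : ∀ h : α → ℝ, Integrable h μ →
      ∫⁻ a, ENNReal.ofReal (h a) ∂μ ≠ ⊤ := fun h hh =>
    ne_top_of_le_ne_top hh.2.ne <| lintegral_mono fun a => by
      rw [Real.enorm_eq_ofReal_abs]
      exact ENNReal.ofReal_le_ofReal (le_abs_self _)
  lift ∫⁻ a, ENNReal.ofReal (g a) ∂μ to NNReal using lintegral_ofReal_ne_top g hg with p hp
  lift ∫⁻ a, ENNReal.ofReal (-g a) ∂μ to NNReal using lintegral_ofReal_ne_top _ hg.neg with q hq
  simp only [erealIntegral, erealPos, EReal.coe_ne_top, ← EReal.coe_neg, EReal.toReal_coe,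
    if_false]
  rw [integral_eq_lintegral_pos_part_sub_lintegral_neg_part hg, ← hp, ← hq]
  rfl

lemma erealIntegral_map {α β : Type*} [MeasurableSpace α] [MeasurableSpace β] {ν : Measure α}
    {f : α → β} (hf : Measurable f) {u : β → EReal} (hu : AEMeasurable u (ν.map f)) :
    erealIntegral (ν.map f) u = erealIntegral ν (u ∘ f) := by
  rw [erealIntegral, erealIntegral,
    lintegral_map' (f := fun x => erealPos (u x))
      (measurable_erealPos.comp_aemeasurable hu) hf.aemeasurable,
    lintegral_map' (f := fun x => erealPos (-u x))
      ((measurable_erealPos.comp measurable_neg).comp_aemeasurable hu) hf.aemeasurable]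
  rfl

lemma UpperSemicontinuousOn.upperSemicontinuous_piecewise_bot {α β : Type*}
    [TopologicalSpace α] [LinearOrder β] [OrderBot β] {u : α → β} {s : Set α}
    [DecidablePred (· ∈ s)] (hu : UpperSemicontinuousOn u s) (hs : IsClosed s) :
    UpperSemicontinuous (s.piecewise u fun _ => ⊥) := by
  intro x c hc
  have hbot : ⊥ < c := bot_le.trans_lt hc
  by_cases hx : x ∈ s
  · rw [piecewise_eq_of_mem _ _ _ hx] at hc
    filter_upwards [eventually_nhdsWithin_iff.1 (hu x hx c hc)] with y hy
    by_cases hys : y ∈ s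
    · simpa [hys] using hy hys
    · simpa [hys] using hbot
  · filter_upwards [hs.isOpen_compl.mem_nhds hx] with y hy
    simpa [piecewise_eq_of_notMem _ _ _ hy] using hbot

lemma UpperSemicontinuousOn.aemeasurable {α β : Type*} [TopologicalSpace α]
    [MeasurableSpace α] [OpensMeasurableSpace α] [TopologicalSpace β] [MeasurableSpace β]
    [BorelSpace β] [LinearOrder β] [OrderBot β] [OrderTopology β]
    [SecondCountableTopology β] {u : α → β} {s : Set α} {μ : Measure α}
    (hu : UpperSemicontinuousOn u s) (hs : IsClosed s) (hμ : μ sᶜ = 0) :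
    AEMeasurable u μ := by
  classical
  refine ⟨_, (hu.upperSemicontinuous_piecewise_bot hs).measurable, ?_⟩
  filter_upwards [measure_eq_zero_iff_ae_notMem.1 hμ] with x hx
  rw [piecewise_eq_of_mem _ _ _ (not_not.1 hx)]

instance : IsProbabilityMeasure circleAngleMeasure := by
  constructor
  simp only [circleAngleMeasure, Measure.smul_apply, Measure.restrict_apply MeasurableSet.univ,
    univ_inter, Real.volume_Ioc, sub_zero, smul_eq_mul]
  exact ENNReal.inv_mul_cancel (by simp [Real.pi_pos]) ENNReal.ofReal_ne_top

lemma Continuous.integrable_circleAngleMeasure {g : ℝ → ℝ} (hg : Continuous g) :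
    Integrable g circleAngleMeasure :=
  hg.integrableOn_Ioc.smul_measure (ENNReal.inv_ne_top.2 (by positivity))

section LineCircle

variable {E : Type*} [NormedAddCommGroup E] [NormedSpace ℂ E]

noncomputable def lineCircle (a b : E) (r θ : ℝ) : E :=
  a + ((r : ℂ) * Complex.exp (θ * Complex.I)) • b

@[fun_prop]
lemma continuous_lineCircle (a b : E) (r : ℝ) : Continuous (lineCircle a b r) := by
  unfold lineCircle
  fun_prop

lemma lineCircle_mem {a b : E} {r : ℝ} {s : Set E} (hr : 0 ≤ r)
    (hs : ∀ w : ℂ, ‖w‖ ≤ r → a + w • b ∈ s) (θ : ℝ) : lineCircle a b r θ ∈ s :=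
  hs _ (by simp [Complex.norm_exp_ofReal_mul_I, abs_of_nonneg hr])

lemma mem_of_forall_add_smul_mem {a b : E} {r : ℝ} {s : Set E} (hr : 0 ≤ r)
    (hs : ∀ w : ℂ, ‖w‖ ≤ r → a + w • b ∈ s) : a ∈ s := by
  simpa using hs 0 (by simpa using hr)

end LineCircle

variable {n : ℕ}

lemma PshOn.le_integral_lineCircle {v : (Fin n → ℂ) → ℝ} {U : Set (Fin n → ℂ)}
    (hv : PshOn (fun z => (v z : EReal)) U) (hvc : ContinuousOn v U)
    {a b : Fin n → ℂ} {r : ℝ} (hr : 0 < r) (hsub : ∀ w : ℂ, ‖w‖ ≤ r → a + w • b ∈ U) :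
    v a ≤ ∫ θ, v (lineCircle a b r θ) ∂circleAngleMeasure := by
  have hcont : Continuous fun θ => v (lineCircle a b r θ) :=
    hvc.comp_continuous (continuous_lineCircle a b r) (lineCircle_mem hr.le hsub)
  have h := hv.2.2 a b r hr hsub
  rwa [← EReal.coe_le_coe_iff, ← erealIntegral_coe hcont.integrable_circleAngleMeasure]

lemma map_lineCircle_mem_jensenMeasures {X : Set (Fin n → ℂ)} (hX : IsClosed X)
    {a b : Fin n → ℂ} {r : ℝ} (hr : 0 < r) (hsub : ∀ w : ℂ, ‖w‖ ≤ r → a + w • b ∈ X) :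
    circleAngleMeasure.map (lineCircle a b r) ∈ JensenMeasures X a := by
  set f := lineCircle a b r
  have hf : Measurable f := (continuous_lineCircle a b r).measurable
  set μ := circleAngleMeasure.map f
  have hμX : μ Xᶜ = 0 := by
    have hfX : f ⁻¹' X = univ := eq_univ_of_forall (lineCircle_mem hr.le hsub)
    rw [Measure.map_apply hf hX.measurableSet.compl, preimage_compl, hfX, compl_univ,
      measure_empty]
  refine ⟨Measure.isProbabilityMeasure_map hf.aemeasurable, hμX, ?_⟩
  rintro w ⟨U, hU, hXU, v, hvc, hv, hvw⟩
  have hae : ∀ᵐ x ∂μ, x ∈ X := measure_eq_zero_iff_ae_notMem.1 hμX |>.mono fun _ => not_not.1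
  have hvm : AEStronglyMeasurable v μ := by
    rw [← Measure.restrict_eq_self_of_ae_mem (hae.mono fun _ hx => hXU hx)]
    exact hvc.aestronglyMeasurable hU.measurableSet
  calc w a = v a := hvw a (mem_of_forall_add_smul_mem hr.le hsub)
    _ ≤ ∫ θ, v (f θ) ∂circleAngleMeasure :=
      hv.le_integral_lineCircle hvc hr fun w hw => hXU (hsub w hw)
    _ = ∫ x, v x ∂μ := (integral_map hf.aemeasurable hvm).symm
    _ = ∫ x, w x ∂μ := integral_congr_ae (hae.mono fun x hx => (hvw x hx).symm)

theorem psh_compact_interior_general {n : ℕ} (X : Set (Fin n → ℂ)) (hX : IsCompact X)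
    (u : (Fin n → ℂ) → EReal)
    (hu : PshCompact u X) :
    PshOn u (interior X) := by
  obtain ⟨husc, hne_top, hjensen⟩ := hu
  refine ⟨husc.mono interior_subset, fun z hz => hne_top z (interior_subset hz), ?_⟩
  intro a b r hr hsub
  have hsubX : ∀ w : ℂ, ‖w‖ ≤ r → a + w • b ∈ X := fun w hw => interior_subset (hsub w hw)
  have hJ := map_lineCircle_mem_jensenMeasures hX.isClosed hr hsubX
  have hum : AEMeasurable u (circleAngleMeasure.map (lineCircle a b r)) :=
    husc.aemeasurable hX.isClosed hJ.2.1
  calc u a ≤ erealIntegral (circleAngleMeasure.map (lineCircle a b r)) u :=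
        hjensen a (mem_of_forall_add_smul_mem hr.le hsubX) _ hJ
    _ = _ := erealIntegral_map (continuous_lineCircle a b r).measurable hum

/-- A function plurisubharmonic on a compact set `X` is plurisubharmonic (in the
classical sense) on the interior of `X`. -/
theorem psh_compact_interior {n : ℕ} (X : Set (Fin n → ℂ)) (hX : IsCompact X)
    (hne : (interior X).Nonempty) (u : (Fin n → ℂ) → EReal)
    (hu : PshCompact u X) :
    PshOn u (interior X) :=
  psh_compact_interior_general X hX u hu
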